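/- arXiv:2507.03030 — 2 statements merged into one kernel-verified Lean document; each statement's English description precedes it below -/
import Mathlib

section
/- Suppose d_G < d_B, d_G <= (delta/(1-delta)) * p_G * c_G, and p_G*c_G/(p_B*c_B) > d_G/(d_B - d_G), where delta in (0,1) and all of p_G, p_B, c_G, c_B, d_G, d_B are positive. Then there exists r in [0,1] such that, setting e = delta*(1-r), we have d_G <= (e/(1-e)) * p_G * c_G and max(d_G, d_B) > (e/(1-e)) * (p_G*c_G + p_B*c_B). -/
theorem optimal_reshuffling_exists
    (δ pG pB cG cB dG dB : ℝ)
    (hδ0 : 0 < δ) (hδ1 : δ < 1)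
    (hpG : 0 < pG) (hpB : 0 < pB) (hcG : 0 < cG) (hcB : 0 < cB)
    (hdG : 0 < dG) (hdB : 0 < dB)
    (h1 : dG < dB)
    (h2 : dG ≤ δ / (1 - δ) * (pG * cG))
    (h3 : pG * cG / (pB * cB) > dG / (dB - dG)) :
    ∃ r : ℝ, 0 ≤ r ∧ r ≤ 1 ∧
      dG ≤ (δ * (1 - r)) / (1 - δ * (1 - r)) * (pG * cG) ∧
      max dG dB > (δ * (1 - r)) / (1 - δ * (1 - r)) * (pG * cG + pB * cB) := by
  have hA : 0 < pG * cG := mul_pos hpG hcG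
  have hB : 0 < pB * cB := mul_pos hpB hcB
  have hS : 0 < pG * cG + dG := by linarith
  set e : ℝ := dG / (pG * cG + dG) with he
  have he0 : 0 < e := div_pos hdG hS
  have he1 : e < 1 := by rw [he, div_lt_one hS]; linarith
  have h1δ : 0 < 1 - δ := by linarith
  have h2' : dG * (1 - δ) ≤ δ * (pG * cG) := by
    rw [div_mul_eq_mul_div, le_div_iff₀ h1δ] at h2; linarith
  have heδ : e ≤ δ := by
    rw [he, div_le_iff₀ hS]; nlinarith
  have hkey : e / (1 - e) = dG / (pG * cG) := by
    rw [he]; rw [one_sub_div hS.ne']; field_simp; ring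
  have h3' : dG * (pB * cB) < pG * cG * (dB - dG) := by
    have := (div_lt_div_iff₀ (by linarith : (0:ℝ) < dB - dG) hB).mp h3
    linarith
  refine ⟨1 - e / δ, ?_, ?_, ?_, ?_⟩
  · have : e / δ ≤ 1 := (div_le_one hδ0).mpr heδ
    linarith
  · have : 0 ≤ e / δ := le_of_lt (div_pos he0 hδ0)
    linarith
  · have hee : δ * (1 - (1 - e / δ)) = e := by field_simp; ring
    rw [hee, hkey, div_mul_cancel₀ _ hA.ne']
  · have hee : δ * (1 - (1 - e / δ)) = e := by field_simp; ring
    rw [hee, hkey, max_eq_right h1.le, gt_iff_lt, div_mul_eq_mul_div,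
      div_lt_iff₀ hA]
    nlinarith
end

section
/- Suppose delta in (0,1), all parameters positive, d_G < d_B, and p_G*c_G/(p_B*c_B) <= d_G/(d_B - d_G). Then for every r in [0,1], with e = delta*(1-r), if d_G <= (e/(1-e)) * p_G * c_G then d_B <= (e/(1-e)) * (p_G*c_G + p_B*c_B). (Failure of condition 3 precludes optimal cooperation.) -/
theorem no_optimal_coop_when_condition3_fails
    (δ pG pB cG cB dG dB : ℝ)
    (hδ0 : 0 < δ) (hδ1 : δ < 1)
    (hpG : 0 < pG) (hpB : 0 < pB) (hcG : 0 < cG) (hcB : 0 < cB)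
    (hdG : 0 < dG) (hdB : 0 < dB)
    (h1 : dG < dB)
    (h3 : pG * cG / (pB * cB) ≤ dG / (dB - dG)) :
    ∀ r : ℝ, 0 ≤ r → r ≤ 1 →
      dG ≤ (δ * (1 - r)) / (1 - δ * (1 - r)) * (pG * cG) →
      dB ≤ (δ * (1 - r)) / (1 - δ * (1 - r)) * (pG * cG + pB * cB) := by
  intro r hr0 hr1 hG
  set e := δ * (1 - r) with he
  have he1 : e < 1 := by nlinarith
  have h1e : 0 < 1 - e := by linarith
  set t := e / (1 - e) with ht
  have ht0 : 0 ≤ t := div_nonneg (by nlinarith) h1e.le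
  -- from h3: (dB - dG) * (pG*cG) ≤ dG * (pB*cB)
  have hsub : 0 < dB - dG := by linarith
  have hpbcb : 0 < pB * cB := mul_pos hpB hcB
  have h3' : (pG * cG) * (dB - dG) ≤ dG * (pB * cB) := by
    have := (div_le_div_iff₀ hpbcb hsub).mp h3
    linarith
  -- dG ≤ t * (pG*cG)
  have key : (pG * cG) * (dB - dG) ≤ t * (pG * cG) * (pB * cB) := by
    calc (pG * cG) * (dB - dG) ≤ dG * (pB * cB) := h3'
    _ ≤ t * (pG * cG) * (pB * cB) := by nlinarith
  have hpgcg : 0 < pG * cG := mul_pos hpG hcG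
  have : dB - dG ≤ t * (pB * cB) := by nlinarith
  nlinarith
end
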